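/- Let W ∈ C^α([0,T]; C^{β₂}(V;V)) and let (Y,Y') be a linear controlled rough path of W with values in V, i.e. Y ∈ C^α([0,T];V), Y' ∈ C^α([0,T]; L(C^{β₂}(V;V);V)), and R^Y_{s,t} := Y_t − Y_s − Y'_s(W_t − W_s) has finite 2α-Hölder seminorm. Define F_t := W_t(Y_t), i.e. the evaluation of W(t,·) at Y_t. Then F is also a linear controlled rough path of W: with F'_t ∈ L(C^{β₂}(V;V);V) defined by F'_t(φ) := φ(Y_t) + DW_t(Y_t)(Y'_t(φ)), the map F belongs to C^α([0,T];V), F' belongs to C^α([0,T];L(C^{β₂}(V;V);V)), and the remainder R^F_{s,t} := F_t − F_s − F'_s(W_t − W_s) has finite 2α-Hölder seminorm. -/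

import Mathlib

open Set

variable {V : Type*} [NormedAddCommGroup V] [NormedSpace ℝ V]

/-- `φ` is a test function of `C^{β₂}(V;V)` with norm pieces bounded by `N`. -/
def TestBound (β₀ β₁ β₂ : ℝ) (φ : V → V) (N : ℝ) : Prop :=
  ContDiff ℝ 2 φ ∧
  (∀ x : V, ‖φ x‖ ≤ N * (1 + ‖x‖) ^ β₀) ∧
  (∀ x : V, ‖fderiv ℝ φ x‖ ≤ N * (1 + ‖x‖) ^ β₁) ∧
  (∀ x : V, ‖iteratedFDeriv ℝ 2 φ x‖ ≤ N * (1 + ‖x‖) ^ β₂)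

/-!
Each increment is split into a time increment of `W` at a fixed point, controlled by the Hölder
bounds on `W`, and a space increment of the fixed map `W s` between `Y s` and `Y t`, controlled by
the mean value inequality. For the remainder the space increment is taken to second order:
`R^F_{s,t} = (W_t - W_s)(Y_t) - (W_t - W_s)(Y_s) + [W_s(Y_t) - W_s(Y_s) - DW_s(Y_s)(Y_t - Y_s)]
+ DW_s(Y_s) R^Y_{s,t}`, where the middle term is `O(‖Y_t - Y_s‖²)` by Taylor's estimate. Since
`Y` is bounded on `[0, T]`, the weights `(1 + ‖x‖)^β` are only ever evaluated on a fixed ball.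
-/

open Metric

section MeanValue

variable {E F : Type*} [NormedAddCommGroup E] [NormedSpace ℝ E] [NormedAddCommGroup F]
  [NormedSpace ℝ F] {f : E → F} {s : Set E} {K : ℝ} {a b : E}

theorem Convex.norm_fderiv_sub_le_of_norm_iteratedFDeriv_two_le (hs : Convex ℝ s)
    (hf : ContDiff ℝ 2 f) (hK : ∀ x ∈ s, ‖iteratedFDeriv ℝ 2 f x‖ ≤ K) (ha : a ∈ s)
    (hb : b ∈ s) : ‖fderiv ℝ f b - fderiv ℝ f a‖ ≤ K * ‖b - a‖ := by
  have hf' : Differentiable ℝ (fderiv ℝ f) :=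
    (hf.fderiv_right (m := 1) le_rfl).differentiable one_ne_zero
  refine hs.norm_image_sub_le_of_norm_fderiv_le (fun x _ => hf' x) (fun x hx => ?_) ha hb
  rw [← norm_iteratedFDeriv_one, norm_iteratedFDeriv_fderiv]
  exact hK x hx

theorem Convex.norm_sub_sub_fderiv_le_of_norm_iteratedFDeriv_two_le (hs : Convex ℝ s)
    (hf : ContDiff ℝ 2 f) (hK : ∀ x ∈ s, ‖iteratedFDeriv ℝ 2 f x‖ ≤ K) (ha : a ∈ s)
    (hb : b ∈ s) : ‖f b - f a - fderiv ℝ f a (b - a)‖ ≤ K * ‖b - a‖ ^ 2 := by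
  have hK0 : 0 ≤ K := (norm_nonneg _).trans (hK a ha)
  have hderiv : ∀ x ∈ s ∩ closedBall a ‖b - a‖, ‖fderiv ℝ f x - fderiv ℝ f a‖ ≤ K * ‖b - a‖ :=
    fun x hx => (hs.norm_fderiv_sub_le_of_norm_iteratedFDeriv_two_le hf hK ha hx.1).trans
      (by gcongr; simpa [dist_eq_norm] using hx.2)
  calc ‖f b - f a - fderiv ℝ f a (b - a)‖ ≤ K * ‖b - a‖ * ‖b - a‖ :=
        (hs.inter (convex_closedBall a _)).norm_image_sub_le_of_norm_fderiv_le'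
          (fun x _ => hf.differentiable two_ne_zero x) hderiv
          ⟨ha, mem_closedBall_self (norm_nonneg _)⟩ ⟨hb, by simp [dist_eq_norm]⟩
    _ = K * ‖b - a‖ ^ 2 := by ring

end MeanValue

section Seminormed

variable {E : Type*} [SeminormedAddCommGroup E]

theorem one_add_norm_rpow_le {x : E} {B β : ℝ} (hβ : 0 ≤ β) (hx : ‖x‖ ≤ B) :
    (1 + ‖x‖) ^ β ≤ (1 + B) ^ β :=
  Real.rpow_le_rpow (by positivity) (by linarith) hβ

theorem norm_le_of_holder_Icc {Y : ℝ → E} {a b C α : ℝ} (hα : 0 ≤ α) (hC : 0 ≤ C)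
    (hY : ∀ s ∈ Icc a b, ∀ t ∈ Icc a b, ‖Y t - Y s‖ ≤ C * |t - s| ^ α) :
    ∀ t ∈ Icc a b, ‖Y t‖ ≤ ‖Y a‖ + C * (b - a) ^ α := by
  intro t ht
  have ha : a ∈ Icc a b := ⟨le_rfl, ht.1.trans ht.2⟩
  calc ‖Y t‖ ≤ ‖Y a‖ + ‖Y t - Y a‖ := norm_le_insert' _ _
    _ ≤ ‖Y a‖ + C * |t - a| ^ α := by gcongr; exact hY a ha t ht
    _ ≤ ‖Y a‖ + C * (b - a) ^ α := by
      rw [abs_of_nonneg (sub_nonneg.2 ht.1)]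
      gcongr
      · linarith [ht.1]
      · linarith [ht.2]

theorem one_add_rpow_nonneg_of_norm_le {x : E} {B : ℝ} (hx : ‖x‖ ≤ B) (β : ℝ) :
    0 ≤ (1 + B) ^ β :=
  Real.rpow_nonneg (by linarith [norm_nonneg x]) β

end Seminormed

namespace TestBound

variable {β₀ β₁ β₂ N B : ℝ} {φ : V → V} {x y : V}

theorem nonneg (h : TestBound β₀ β₁ β₂ φ N) : 0 ≤ N := by
  simpa using (norm_nonneg _).trans (h.2.1 0)

theorem differentiable (h : TestBound β₀ β₁ β₂ φ N) : Differentiable ℝ φ :=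
  h.1.differentiable two_ne_zero

theorem norm_fderiv_le (h : TestBound β₀ β₁ β₂ φ N) (hβ₁ : 0 ≤ β₁) (hx : ‖x‖ ≤ B) :
    ‖fderiv ℝ φ x‖ ≤ N * (1 + B) ^ β₁ :=
  (h.2.2.1 x).trans (mul_le_mul_of_nonneg_left (one_add_norm_rpow_le hβ₁ hx) h.nonneg)

theorem norm_iteratedFDeriv_two_le (h : TestBound β₀ β₁ β₂ φ N) (hβ₂ : 0 ≤ β₂)
    (hx : ‖x‖ ≤ B) : ‖iteratedFDeriv ℝ 2 φ x‖ ≤ N * (1 + B) ^ β₂ :=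
  (h.2.2.2 x).trans (mul_le_mul_of_nonneg_left (one_add_norm_rpow_le hβ₂ hx) h.nonneg)

theorem norm_sub_le (h : TestBound β₀ β₁ β₂ φ N) (hβ₁ : 0 ≤ β₁) (hx : ‖x‖ ≤ B)
    (hy : ‖y‖ ≤ B) : ‖φ y - φ x‖ ≤ N * (1 + B) ^ β₁ * ‖y - x‖ :=
  (convex_closedBall 0 B).norm_image_sub_le_of_norm_fderiv_le
    (fun z _ => h.differentiable z)
    (fun _ hz => h.norm_fderiv_le hβ₁ (mem_closedBall_zero_iff.1 hz))
    (mem_closedBall_zero_iff.2 hx) (mem_closedBall_zero_iff.2 hy)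

theorem norm_fderiv_sub_le (h : TestBound β₀ β₁ β₂ φ N) (hβ₂ : 0 ≤ β₂) (hx : ‖x‖ ≤ B)
    (hy : ‖y‖ ≤ B) : ‖fderiv ℝ φ y - fderiv ℝ φ x‖ ≤ N * (1 + B) ^ β₂ * ‖y - x‖ :=
  (convex_closedBall 0 B).norm_fderiv_sub_le_of_norm_iteratedFDeriv_two_le h.1
    (fun _ hz => h.norm_iteratedFDeriv_two_le hβ₂ (mem_closedBall_zero_iff.1 hz))
    (mem_closedBall_zero_iff.2 hx) (mem_closedBall_zero_iff.2 hy)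

theorem norm_sub_sub_fderiv_le (h : TestBound β₀ β₁ β₂ φ N) (hβ₂ : 0 ≤ β₂) (hx : ‖x‖ ≤ B)
    (hy : ‖y‖ ≤ B) : ‖φ y - φ x - fderiv ℝ φ x (y - x)‖ ≤ N * (1 + B) ^ β₂ * ‖y - x‖ ^ 2 :=
  (convex_closedBall 0 B).norm_sub_sub_fderiv_le_of_norm_iteratedFDeriv_two_le h.1
    (fun _ hz => h.norm_iteratedFDeriv_two_le hβ₂ (mem_closedBall_zero_iff.1 hz))
    (mem_closedBall_zero_iff.2 hx) (mem_closedBall_zero_iff.2 hy)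

end TestBound

section ControlledPath

variable {S : Set ℝ} {α β₀ β₁ β₂ MW NW CY B : ℝ} {W : ℝ → V → V} {Y : ℝ → V} {s t : ℝ}

theorem norm_fderiv_increment_le (hβ₁ : 0 ≤ β₁) (hNW : 0 ≤ NW)
    (hW₁ : ∀ s ∈ S, ∀ t ∈ S, ∀ x : V,
      ‖fderiv ℝ (fun y => W t y - W s y) x‖ ≤ NW * |t - s| ^ α * (1 + ‖x‖) ^ β₁)
    (hs : s ∈ S) (ht : t ∈ S) {x : V} (hx : ‖x‖ ≤ B) :
    ‖fderiv ℝ (fun y => W t y - W s y) x‖ ≤ NW * (1 + B) ^ β₁ * |t - s| ^ α :=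
  calc _ ≤ NW * |t - s| ^ α * (1 + ‖x‖) ^ β₁ := hW₁ s hs t ht x
    _ ≤ NW * |t - s| ^ α * (1 + B) ^ β₁ := by gcongr
    _ = NW * (1 + B) ^ β₁ * |t - s| ^ α := by ring

theorem norm_eval_sub_le (hβ₀ : 0 ≤ β₀) (hβ₁ : 0 ≤ β₁) (hNW : 0 ≤ NW)
    (hW : ∀ t ∈ S, TestBound β₀ β₁ β₂ (W t) MW)
    (hW₀ : ∀ s ∈ S, ∀ t ∈ S, ∀ x : V, ‖W t x - W s x‖ ≤ NW * |t - s| ^ α * (1 + ‖x‖) ^ β₀)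
    (hY : ∀ s ∈ S, ∀ t ∈ S, ‖Y t - Y s‖ ≤ CY * |t - s| ^ α) (hYB : ∀ t ∈ S, ‖Y t‖ ≤ B)
    (hs : s ∈ S) (ht : t ∈ S) :
    ‖W t (Y t) - W s (Y s)‖ ≤ (NW * (1 + B) ^ β₀ + MW * (1 + B) ^ β₁ * CY) * |t - s| ^ α := by
  have hW_lip : 0 ≤ MW * (1 + B) ^ β₁ :=
    mul_nonneg (hW s hs).nonneg (one_add_rpow_nonneg_of_norm_le (hYB s hs) _)
  calc ‖W t (Y t) - W s (Y s)‖ ≤ ‖W t (Y t) - W s (Y t)‖ + ‖W s (Y t) - W s (Y s)‖ :=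
        norm_sub_le_norm_sub_add_norm_sub _ _ _
    _ ≤ NW * |t - s| ^ α * (1 + B) ^ β₀ + MW * (1 + B) ^ β₁ * (CY * |t - s| ^ α) := by
        gcongr
        · exact (hW₀ s hs t ht _).trans (by gcongr; exact hYB t ht)
        · exact ((hW s hs).norm_sub_le hβ₁ (hYB s hs) (hYB t ht)).trans
            (mul_le_mul_of_nonneg_left (hY s hs t ht) hW_lip)
    _ = (NW * (1 + B) ^ β₀ + MW * (1 + B) ^ β₁ * CY) * |t - s| ^ α := by ring

theorem norm_gubinelli_sub_le (hβ₁ : 0 ≤ β₁) (hβ₂ : 0 ≤ β₂) (hNW : 0 ≤ NW)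
    (hW : ∀ t ∈ S, TestBound β₀ β₁ β₂ (W t) MW)
    (hW₁ : ∀ s ∈ S, ∀ t ∈ S, ∀ x : V,
      ‖fderiv ℝ (fun y => W t y - W s y) x‖ ≤ NW * |t - s| ^ α * (1 + ‖x‖) ^ β₁)
    (hY : ∀ s ∈ S, ∀ t ∈ S, ‖Y t - Y s‖ ≤ CY * |t - s| ^ α) (hYB : ∀ t ∈ S, ‖Y t‖ ≤ B)
    {φ : V → V} {N : ℝ} (hφ : TestBound β₀ β₁ β₂ φ N) {v : ℝ → V} {M C : ℝ}
    (hvt : ‖v t‖ ≤ M * N) (hv : ‖v t - v s‖ ≤ C * N * |t - s| ^ α) (hs : s ∈ S) (ht : t ∈ S) :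
    ‖(φ (Y t) + fderiv ℝ (W t) (Y t) (v t)) - (φ (Y s) + fderiv ℝ (W s) (Y s) (v s))‖ ≤
      ((1 + B) ^ β₁ * CY + NW * (1 + B) ^ β₁ * M + MW * (1 + B) ^ β₂ * CY * M
        + MW * (1 + B) ^ β₁ * C) * N * |t - s| ^ α := by
  have hw := one_add_rpow_nonneg_of_norm_le (hYB s hs)
  have hMW := (hW s hs).nonneg
  have key : (φ (Y t) + fderiv ℝ (W t) (Y t) (v t)) - (φ (Y s) + fderiv ℝ (W s) (Y s) (v s))
      = (φ (Y t) - φ (Y s)) + (fderiv ℝ (W t) (Y t) - fderiv ℝ (W s) (Y t)) (v t)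
        + (fderiv ℝ (W s) (Y t) - fderiv ℝ (W s) (Y s)) (v t)
        + fderiv ℝ (W s) (Y s) (v t - v s) := by
    simp only [sub_apply, map_sub]; abel
  have hφ_inc : ‖φ (Y t) - φ (Y s)‖ ≤ N * (1 + B) ^ β₁ * (CY * |t - s| ^ α) :=
    (hφ.norm_sub_le hβ₁ (hYB s hs) (hYB t ht)).trans
      (mul_le_mul_of_nonneg_left (hY s hs t ht) (mul_nonneg hφ.nonneg (hw _)))
  have hDW_time : ‖fderiv ℝ (W t) (Y t) - fderiv ℝ (W s) (Y t)‖ ≤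
      NW * (1 + B) ^ β₁ * |t - s| ^ α := by
    rw [← fderiv_fun_sub ((hW t ht).differentiable _) ((hW s hs).differentiable _)]
    exact norm_fderiv_increment_le hβ₁ hNW hW₁ hs ht (hYB t ht)
  have hDW_space : ‖fderiv ℝ (W s) (Y t) - fderiv ℝ (W s) (Y s)‖ ≤
      MW * (1 + B) ^ β₂ * (CY * |t - s| ^ α) :=
    ((hW s hs).norm_fderiv_sub_le hβ₂ (hYB s hs) (hYB t ht)).trans
      (mul_le_mul_of_nonneg_left (hY s hs t ht) (mul_nonneg hMW (hw _)))
  calc _ ≤ ‖φ (Y t) - φ (Y s)‖ + ‖(fderiv ℝ (W t) (Y t) - fderiv ℝ (W s) (Y t)) (v t)‖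
        + ‖(fderiv ℝ (W s) (Y t) - fderiv ℝ (W s) (Y s)) (v t)‖
        + ‖fderiv ℝ (W s) (Y s) (v t - v s)‖ := by rw [key]; exact norm_add₄_le
    _ ≤ N * (1 + B) ^ β₁ * (CY * |t - s| ^ α) + NW * (1 + B) ^ β₁ * |t - s| ^ α * (M * N)
        + MW * (1 + B) ^ β₂ * (CY * |t - s| ^ α) * (M * N)
        + MW * (1 + B) ^ β₁ * (C * N * |t - s| ^ α) := by
      gcongr
      · exact ContinuousLinearMap.le_of_opNorm_le_of_le _ hDW_time hvt
      · exact ContinuousLinearMap.le_of_opNorm_le_of_le _ hDW_space hvt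
      · exact ContinuousLinearMap.le_of_opNorm_le_of_le _
          ((hW s hs).norm_fderiv_le hβ₁ (hYB s hs)) hv
    _ = _ := by ring

theorem norm_eval_remainder_le (hβ₁ : 0 ≤ β₁) (hβ₂ : 0 ≤ β₂) (hNW : 0 ≤ NW)
    (hW : ∀ t ∈ S, TestBound β₀ β₁ β₂ (W t) MW)
    (hW₁ : ∀ s ∈ S, ∀ t ∈ S, ∀ x : V,
      ‖fderiv ℝ (fun y => W t y - W s y) x‖ ≤ NW * |t - s| ^ α * (1 + ‖x‖) ^ β₁)
    (hY : ∀ s ∈ S, ∀ t ∈ S, ‖Y t - Y s‖ ≤ CY * |t - s| ^ α) (hYB : ∀ t ∈ S, ‖Y t‖ ≤ B)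
    {u : V} {CR : ℝ} (hu : ‖Y t - Y s - u‖ ≤ CR * |t - s| ^ (2 * α)) (hs : s ∈ S)
    (ht : t ∈ S) :
    ‖W t (Y t) - W s (Y s) - ((W t (Y s) - W s (Y s)) + fderiv ℝ (W s) (Y s) u)‖ ≤
      (NW * (1 + B) ^ β₁ * CY + MW * (1 + B) ^ β₂ * CY ^ 2 + MW * (1 + B) ^ β₁ * CR)
        * |t - s| ^ (2 * α) := by
  set L := fderiv ℝ (W s) (Y s)
  have hw := one_add_rpow_nonneg_of_norm_le (hYB s hs)
  have hsq : |t - s| ^ (2 * α) = (|t - s| ^ α) ^ 2 := by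
    rw [mul_comm]; exact_mod_cast Real.rpow_mul_natCast (abs_nonneg _) α 2
  have key : W t (Y t) - W s (Y s) - ((W t (Y s) - W s (Y s)) + L u)
      = ((W t (Y t) - W s (Y t)) - (W t (Y s) - W s (Y s)))
        + (W s (Y t) - W s (Y s) - L (Y t - Y s)) + L (Y t - Y s - u) := by
    simp only [map_sub]; abel
  have hinc : ‖(W t (Y t) - W s (Y t)) - (W t (Y s) - W s (Y s))‖ ≤
      NW * (1 + B) ^ β₁ * |t - s| ^ α * (CY * |t - s| ^ α) :=
    ((convex_closedBall (0 : V) B).norm_image_sub_le_of_norm_fderiv_le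
      (fun x _ => ((hW t ht).differentiable.sub (hW s hs).differentiable) x)
      (fun _ hx => norm_fderiv_increment_le hβ₁ hNW hW₁ hs ht (mem_closedBall_zero_iff.1 hx))
      (mem_closedBall_zero_iff.2 (hYB s hs)) (mem_closedBall_zero_iff.2 (hYB t ht))).trans
      (mul_le_mul_of_nonneg_left (hY s hs t ht)
        (mul_nonneg (mul_nonneg hNW (hw _)) (by positivity)))
  have htaylor : ‖W s (Y t) - W s (Y s) - L (Y t - Y s)‖ ≤
      MW * (1 + B) ^ β₂ * (CY * |t - s| ^ α) ^ 2 :=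
    ((hW s hs).norm_sub_sub_fderiv_le hβ₂ (hYB s hs) (hYB t ht)).trans
      (mul_le_mul_of_nonneg_left (pow_le_pow_left₀ (norm_nonneg _) (hY s hs t ht) 2)
        (mul_nonneg (hW s hs).nonneg (hw _)))
  calc _ ≤ ‖(W t (Y t) - W s (Y t)) - (W t (Y s) - W s (Y s))‖
        + ‖W s (Y t) - W s (Y s) - L (Y t - Y s)‖ + ‖L (Y t - Y s - u)‖ := by
        rw [key]; exact norm_add₃_le
    _ ≤ NW * (1 + B) ^ β₁ * |t - s| ^ α * (CY * |t - s| ^ α)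
        + MW * (1 + B) ^ β₂ * (CY * |t - s| ^ α) ^ 2
        + MW * (1 + B) ^ β₁ * (CR * |t - s| ^ (2 * α)) := by
      gcongr
      exact ContinuousLinearMap.le_of_opNorm_le_of_le _
        ((hW s hs).norm_fderiv_le hβ₁ (hYB s hs)) hu
    _ = _ := by rw [hsq]; ring

end ControlledPath

theorem stmt_19_general
    (T α β₀ β₁ β₂ : ℝ) (hα1 : 1 / 3 < α)
    (hβ₀ : 0 ≤ β₀) (hβ₁ : 0 ≤ β₁) (hβ₂ : 0 ≤ β₂)
    (W : ℝ → V → V) (MW NW : ℝ)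
    (hWval : ∀ t ∈ Icc (0 : ℝ) T, TestBound β₀ β₁ β₂ (W t) MW)
    (hWH0 : ∀ s ∈ Icc (0 : ℝ) T, ∀ t ∈ Icc (0 : ℝ) T, ∀ x : V,
      ‖W t x - W s x‖ ≤ NW * |t - s| ^ α * (1 + ‖x‖) ^ β₀)
    (hWH1 : ∀ s ∈ Icc (0 : ℝ) T, ∀ t ∈ Icc (0 : ℝ) T, ∀ x : V,
      ‖fderiv ℝ (fun y => W t y - W s y) x‖ ≤ NW * |t - s| ^ α * (1 + ‖x‖) ^ β₁)
    (Y : ℝ → V) (Y' : ℝ → (V → V) → V) (CY MY' CY' CR : ℝ)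
    (hCY : ∀ s ∈ Icc (0 : ℝ) T, ∀ t ∈ Icc (0 : ℝ) T, ‖Y t - Y s‖ ≤ CY * |t - s| ^ α)
    (hY'bdd : ∀ t ∈ Icc (0 : ℝ) T, ∀ (φ : V → V) (N : ℝ), 0 ≤ N → TestBound β₀ β₁ β₂ φ N →
      ‖Y' t φ‖ ≤ MY' * N)
    (hY'H : ∀ s ∈ Icc (0 : ℝ) T, ∀ t ∈ Icc (0 : ℝ) T,
      ∀ (φ : V → V) (N : ℝ), 0 ≤ N → TestBound β₀ β₁ β₂ φ N →
      ‖Y' t φ - Y' s φ‖ ≤ CY' * N * |t - s| ^ α)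
    (hR : ∀ s ∈ Icc (0 : ℝ) T, ∀ t ∈ Icc (0 : ℝ) T,
      ‖Y t - Y s - Y' s (fun x => W t x - W s x)‖ ≤ CR * |t - s| ^ (2 * α)) :
    -- F is α-Hölder with values in V
    (∃ C : ℝ, ∀ s ∈ Icc (0 : ℝ) T, ∀ t ∈ Icc (0 : ℝ) T,
      ‖W t (Y t) - W s (Y s)‖ ≤ C * |t - s| ^ α) ∧
    -- F' is α-Hölder in operator norm
    (∃ C : ℝ, ∀ s ∈ Icc (0 : ℝ) T, ∀ t ∈ Icc (0 : ℝ) T,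
      ∀ (φ : V → V) (N : ℝ), 0 ≤ N → TestBound β₀ β₁ β₂ φ N →
        ‖(φ (Y t) + fderiv ℝ (W t) (Y t) (Y' t φ))
            - (φ (Y s) + fderiv ℝ (W s) (Y s) (Y' s φ))‖ ≤ C * N * |t - s| ^ α) ∧
    -- the remainder R^F is 2α-Hölder
    (∃ C : ℝ, ∀ s ∈ Icc (0 : ℝ) T, ∀ t ∈ Icc (0 : ℝ) T,
      ‖W t (Y t) - W s (Y s)
          - ((W t (Y s) - W s (Y s))
              + fderiv ℝ (W s) (Y s) (Y' s (fun x => W t x - W s x)))‖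
        ≤ C * |t - s| ^ (2 * α)) := by
  have hNW : 0 ≤ max NW 0 := le_max_right _ _
  have hWH0' : ∀ s ∈ Icc (0 : ℝ) T, ∀ t ∈ Icc (0 : ℝ) T, ∀ x : V,
      ‖W t x - W s x‖ ≤ max NW 0 * |t - s| ^ α * (1 + ‖x‖) ^ β₀ :=
    fun s hs t ht x => (hWH0 s hs t ht x).trans (by gcongr; exact le_max_left _ _)
  have hWH1' : ∀ s ∈ Icc (0 : ℝ) T, ∀ t ∈ Icc (0 : ℝ) T, ∀ x : V,
      ‖fderiv ℝ (fun y => W t y - W s y) x‖ ≤ max NW 0 * |t - s| ^ α * (1 + ‖x‖) ^ β₁ :=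
    fun s hs t ht x => (hWH1 s hs t ht x).trans (by gcongr; exact le_max_left _ _)
  have hCY' : ∀ s ∈ Icc (0 : ℝ) T, ∀ t ∈ Icc (0 : ℝ) T,
      ‖Y t - Y s‖ ≤ max CY 0 * |t - s| ^ α :=
    fun s hs t ht => (hCY s hs t ht).trans (by gcongr; exact le_max_left _ _)
  have hYB := norm_le_of_holder_Icc (by linarith) (le_max_right _ _) hCY'
  exact ⟨⟨_, fun s hs t ht => norm_eval_sub_le hβ₀ hβ₁ hNW hWval hWH0' hCY' hYB hs ht⟩,
    ⟨_, fun s hs t ht φ N hN hφ => norm_gubinelli_sub_le (v := (Y' · φ)) hβ₁ hβ₂ hNW hWval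
      hWH1' hCY' hYB hφ (hY'bdd t ht φ N hN hφ) (hY'H s hs t ht φ N hN hφ) hs ht⟩,
    ⟨_, fun s hs t ht => norm_eval_remainder_le hβ₁ hβ₂ hNW hWval hWH1' hCY' hYB
      (hR s hs t ht) hs ht⟩⟩

/-- Lemma 5.3: if `W ∈ C^α([0,T]; C^{β₂}(V;V))` and `(Y, Y')` is a linear controlled rough
path of `W` with values in `V` (here `Y' t : (V → V) → V` is a linear operator on test
functions, with operator norm bound `MY'`, α-Hölder with constant `CY'`, and remainder
`R^Y_{s,t} = Y_t - Y_s - Y'_s(W_t - W_s)` bounded by `CR |t-s|^{2α}`), then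
`F_t = W_t(Y_t)` is also a linear controlled rough path of `W`, with Gubinelli derivative
`F'_t(φ) = φ(Y_t) + DW_t(Y_t)(Y'_t(φ))`: `F` and `F'` are α-Hölder (operator-norm
statements being expressed through test functions) and the remainder
`R^F_{s,t} = F_t - F_s - F'_s(W_t - W_s)` is 2α-Hölder. -/
theorem stmt_19
    (T α β₀ β₁ β₂ : ℝ) (hT : 0 < T) (hα1 : 1 / 3 < α) (hα2 : α ≤ 1 / 2)
    (hβ₀ : 0 ≤ β₀) (hβ₁ : 0 ≤ β₁) (hβ₂ : 0 ≤ β₂)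
    (W : ℝ → V → V) (MW NW : ℝ)
    (hWsm : ∀ t ∈ Icc (0 : ℝ) T, ContDiff ℝ 2 (W t))
    (hWval : ∀ t ∈ Icc (0 : ℝ) T, TestBound β₀ β₁ β₂ (W t) MW)
    (hWH0 : ∀ s ∈ Icc (0 : ℝ) T, ∀ t ∈ Icc (0 : ℝ) T, ∀ x : V,
      ‖W t x - W s x‖ ≤ NW * |t - s| ^ α * (1 + ‖x‖) ^ β₀)
    (hWH1 : ∀ s ∈ Icc (0 : ℝ) T, ∀ t ∈ Icc (0 : ℝ) T, ∀ x : V,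
      ‖fderiv ℝ (fun y => W t y - W s y) x‖ ≤ NW * |t - s| ^ α * (1 + ‖x‖) ^ β₁)
    (hWH2 : ∀ s ∈ Icc (0 : ℝ) T, ∀ t ∈ Icc (0 : ℝ) T, ∀ x : V,
      ‖iteratedFDeriv ℝ 2 (fun y => W t y - W s y) x‖ ≤ NW * |t - s| ^ α * (1 + ‖x‖) ^ β₂)
    (Y : ℝ → V) (Y' : ℝ → (V → V) → V) (CY MY' CY' CR : ℝ)
    (hY'lin : ∀ t ∈ Icc (0 : ℝ) T, IsLinearMap ℝ (Y' t))
    (hCY : ∀ s ∈ Icc (0 : ℝ) T, ∀ t ∈ Icc (0 : ℝ) T, ‖Y t - Y s‖ ≤ CY * |t - s| ^ α)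
    (hY'bdd : ∀ t ∈ Icc (0 : ℝ) T, ∀ (φ : V → V) (N : ℝ), 0 ≤ N → TestBound β₀ β₁ β₂ φ N →
      ‖Y' t φ‖ ≤ MY' * N)
    (hY'H : ∀ s ∈ Icc (0 : ℝ) T, ∀ t ∈ Icc (0 : ℝ) T,
      ∀ (φ : V → V) (N : ℝ), 0 ≤ N → TestBound β₀ β₁ β₂ φ N →
      ‖Y' t φ - Y' s φ‖ ≤ CY' * N * |t - s| ^ α)
    (hR : ∀ s ∈ Icc (0 : ℝ) T, ∀ t ∈ Icc (0 : ℝ) T,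
      ‖Y t - Y s - Y' s (fun x => W t x - W s x)‖ ≤ CR * |t - s| ^ (2 * α)) :
    -- F is α-Hölder with values in V
    (∃ C : ℝ, ∀ s ∈ Icc (0 : ℝ) T, ∀ t ∈ Icc (0 : ℝ) T,
      ‖W t (Y t) - W s (Y s)‖ ≤ C * |t - s| ^ α) ∧
    -- F' is α-Hölder in operator norm
    (∃ C : ℝ, ∀ s ∈ Icc (0 : ℝ) T, ∀ t ∈ Icc (0 : ℝ) T,
      ∀ (φ : V → V) (N : ℝ), 0 ≤ N → TestBound β₀ β₁ β₂ φ N →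
        ‖(φ (Y t) + fderiv ℝ (W t) (Y t) (Y' t φ))
            - (φ (Y s) + fderiv ℝ (W s) (Y s) (Y' s φ))‖ ≤ C * N * |t - s| ^ α) ∧
    -- the remainder R^F is 2α-Hölder
    (∃ C : ℝ, ∀ s ∈ Icc (0 : ℝ) T, ∀ t ∈ Icc (0 : ℝ) T,
      ‖W t (Y t) - W s (Y s)
          - ((W t (Y s) - W s (Y s))
              + fderiv ℝ (W s) (Y s) (Y' s (fun x => W t x - W s x)))‖
        ≤ C * |t - s| ^ (2 * α)) :=
  stmt_19_general T α β₀ β₁ β₂ hα1 hβ₀ hβ₁ hβ₂ W MW NW hWval hWH0 hWH1 Y Y' CY MY' CY' CR hCY hY'bdd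
    hY'H hR
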